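/- Let X and Y be 2×2 matrices over a commutative ring S such that XY = YX. Then (str(XY))² = det(X)·(str(Y))² + det(Y)·(str(X))² + tr(XY)·str(Y)·str(X), where str(M) := m₁₁ − m₂₂ is the supertrace. -/
import Mathlib


/-- The supertrace of a 2×2 matrix: `str M = M 0 0 - M 1 1`. -/
def str {S : Type*} [CommRing S] (M : Matrix (Fin 2) (Fin 2) S) : S :=
  M 0 0 - M 1 1

theorem str_sq_of_commuting {S : Type*} [CommRing S]
    (X Y : Matrix (Fin 2) (Fin 2) S) (h : X * Y = Y * X) :
    (str (X * Y)) ^ 2 =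
      X.det * (str Y) ^ 2 + Y.det * (str X) ^ 2
        + Matrix.trace (X * Y) * str Y * str X := by
  have h00 := congrFun (congrFun h 0) 0
  have h01 := congrFun (congrFun h 0) 1
  have h10 := congrFun (congrFun h 1) 0
  simp only [Matrix.mul_apply, Fin.sum_univ_two] at h00 h01 h10
  simp only [str, Matrix.mul_apply, Matrix.det_fin_two, Matrix.trace_fin_two,
    Fin.sum_univ_two]
  linear_combination
    (-(X 0 0 * Y 1 0 + X 1 0 * Y 0 0 + X 1 0 * Y 1 1 + X 1 1 * Y 1 0)) * h01
      + (-2 * (X 0 0 * Y 0 1 + X 0 1 * Y 1 1)) * h10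
      + (X 0 1 * Y 1 0 - X 1 0 * Y 0 1) * h00
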